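/- Let R be an LM-system, s = f(s1,…,sm) an innermost redex, and t = g(t1,…,tn) a term with all proper subterms irreducible, where f ≠ g. Then s and t are joinable modulo R if and only if exactly one of the following holds: (a) there is a unique rule l → r in R with root pair (f, g) such that s rewrites to t in one step by it; or (b) there are unique rules l1 → r1 and l2 → r2 with root pairs (f, h) and (g, h) for some symbol h such that s rewrites in one step by the first to some term t̂ and t rewrites in one step by the second to the same t̂. -/

import Mathlib

/-! Basic first-order terms, positions, substitutions and rewriting. -/

inductive Term (F : Type) : Type
  | var : Nat → Term F
  | app : F → List (Term F) → Term F

namespace Term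

def subst {F : Type} (σ : Nat → Term F) : Term F → Term F
  | var n => σ n
  | app f ts => app f (ts.attach.map fun ⟨t, _⟩ => t.subst σ)

def root {F : Type} : Term F → Option F
  | var _ => none
  | app f _ => some f

def label {F : Type} : Term F → F ⊕ Nat
  | var n => Sum.inr n
  | app f _ => Sum.inl f

def IsVar {F : Type} : Term F → Prop
  | var _ => True
  | app _ _ => False

def varsL {F : Type} : Term F → List Nat
  | var n => [n]
  | app _ ts => (ts.attach.map fun ⟨t, _⟩ => t.varsL).flatten

end Term

abbrev Rule (F : Type) := Term F × Term F
abbrev TRS (F : Type) := Set (Rule F)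

/-- `SubtermAt t p u` : the subterm of `t` at position `p` is `u`. -/
inductive SubtermAt {F : Type} : Term F → List Nat → Term F → Prop
  | here (t : Term F) : SubtermAt t [] t
  | there {f : F} {ts : List (Term F)} {i : Nat} {u : Term F} {p : List Nat} {v : Term F} :
      ts[i]? = some u → SubtermAt u p v → SubtermAt (Term.app f ts) (i :: p) v

/-- `ReplaceAt t p v t'` : replacing the subterm of `t` at position `p` by `v` yields `t'`. -/
inductive ReplaceAt {F : Type} : Term F → List Nat → Term F → Term F → Prop
  | here (t u : Term F) : ReplaceAt t [] u u
  | there {f : F} {ts : List (Term F)} {i : Nat} {u : Term F} {p : List Nat} {v w : Term F} :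
      ts[i]? = some u → ReplaceAt u p v w →
      ReplaceAt (Term.app f ts) (i :: p) v (Term.app f (ts.set i w))

variable {F : Type}

/-- One rewrite step using the given rule (at some position, with some substitution). -/
def RuleStep (ρ : Rule F) (s t : Term F) : Prop :=
  ∃ (σ : Nat → Term F) (p : List Nat),
    SubtermAt s p (ρ.1.subst σ) ∧ ReplaceAt s p (ρ.2.subst σ) t

def OneStep (R : TRS F) (s t : Term F) : Prop := ∃ ρ ∈ R, RuleStep ρ s t

/-- A rewrite step at the root position. -/
def RootStep (R : TRS F) (s t : Term F) : Prop :=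
  ∃ ρ ∈ R, ∃ σ : Nat → Term F, s = ρ.1.subst σ ∧ t = ρ.2.subst σ

def StarRW (R : TRS F) : Term F → Term F → Prop := Relation.ReflTransGen (OneStep R)
def Plus (R : TRS F) : Term F → Term F → Prop := Relation.TransGen (OneStep R)
/-- Convertibility (the congruence / equational theory generated by `R`). -/
def Conv (R : TRS F) : Term F → Term F → Prop := Relation.EqvGen (OneStep R)
def Joinable (R : TRS F) (s t : Term F) : Prop := ∃ u, StarRW R s u ∧ StarRW R t u
def NormalForm (R : TRS F) (t : Term F) : Prop := ∀ u, ¬ OneStep R t u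
/-- `t` is the `R`-normal form of `s`. -/
def NFof (R : TRS F) (s t : Term F) : Prop := StarRW R s t ∧ NormalForm R t
def Terminating (R : TRS F) : Prop := WellFounded (fun a b : Term F => OneStep R b a)
def Confluent (R : TRS F) : Prop := ∀ s t u, StarRW R s t → StarRW R s u → Joinable R t u
def Convergent (R : TRS F) : Prop := Confluent R ∧ Terminating R

/-- every proper subterm is irreducible -/
def EpsIrreducible (R : TRS F) (t : Term F) : Prop :=
  ∀ p u, SubtermAt t p u → p ≠ [] → NormalForm R u

def InnermostRedex (R : TRS F) (t : Term F) : Prop :=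
  EpsIrreducible R t ∧ ¬ NormalForm R t

/-- Forward-closed, via the one-step-to-normal-form characterization. -/
def FCclosed (R : TRS F) : Prop :=
  ∀ t, InnermostRedex R t → ∀ u, NFof R t u → OneStep R t u

def Unifies (σ : Nat → Term F) (s t : Term F) : Prop := s.subst σ = t.subst σ

def IsMGU (σ : Nat → Term F) (s t : Term F) : Prop :=
  Unifies σ s t ∧ ∀ τ, Unifies τ s t → ∃ δ, ∀ x, τ x = (σ x).subst δ

def IsRenaming (ρ : Nat → Term F) : Prop :=
  ∃ f : Nat → Nat, Function.Injective f ∧ ∀ n, ρ n = Term.var (f n)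

/-- Redundancy criterion for an oriented equation `e` whose right-hand side is
reachable from its left-hand side: some proper subterm of the lhs is reducible. -/
def Redundant (R : TRS F) (e : Rule F) : Prop :=
  ∃ p u, p ≠ ([] : List Nat) ∧ SubtermAt e.1 p u ∧ ¬ NormalForm R u

/-- `R₁ ↝ R₂`: forward overlaps of rules of `R₂` (renamed apart) into
right-hand sides of rules of `R₁`, at non-variable positions, via an mgu. -/
def FStep (R₁ R₂ : TRS F) : TRS F :=
  { e | ∃ (l₁ r₁ l₂ r₂ : Term F) (ρ : Nat → Term F) (p : List Nat) (u : Term F)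
          (σ : Nat → Term F) (r₁' : Term F),
      (l₁, r₁) ∈ R₁ ∧ (l₂, r₂) ∈ R₂ ∧ IsRenaming ρ ∧
      SubtermAt r₁ p u ∧ ¬ u.IsVar ∧ IsMGU σ u (l₂.subst ρ) ∧
      ReplaceAt r₁ p (r₂.subst ρ) r₁' ∧ e = (l₁.subst σ, r₁'.subst σ) }

def FCiter (R : TRS F) : Nat → TRS F
  | 0 => R
  | k + 1 => FCiter R k ∪ { e | e ∈ FStep (FCiter R k) R ∧ ¬ Redundant (FCiter R k) e }

def FCinf (R : TRS F) : TRS F := ⋃ k, FCiter R k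

/-- Forward-closed, via the forward-closure construction: `FC(R) = R`. -/
def ForwardClosedFC (R : TRS F) : Prop := FCinf R = R

/-- `RHS(R)`: `R` together with the conclusions of right-hand-side critical
pair inferences (second rule renamed apart). -/
def RHSset (R : TRS F) : TRS F :=
  R ∪ { e | ∃ (s t u₀ v₀ : Term F) (ρ σ : Nat → Term F), (s, t) ∈ R ∧ (u₀, v₀) ∈ R ∧
        IsRenaming ρ ∧ IsMGU σ t (v₀.subst ρ) ∧
        s.subst σ ≠ (u₀.subst ρ).subst σ ∧ e = (s.subst σ, (u₀.subst ρ).subst σ) }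

/-- the (unordered) pairs of root symbols of two equations coincide -/
def RootPairSimilar (e₁ e₂ : Rule F) : Prop :=
  (e₁.1.root = e₂.1.root ∧ e₁.2.root = e₂.2.root) ∨
  (e₁.1.root = e₂.2.root ∧ e₁.2.root = e₂.1.root)

def QuasiDet (E : TRS F) : Prop :=
  (∀ e ∈ E, ¬ e.1.IsVar ∧ ¬ e.2.IsVar) ∧
  (∀ e ∈ E, e.1.root ≠ e.2.root) ∧
  (∀ e₁ ∈ E, ∀ e₂ ∈ E, e₁ ≠ e₂ → ¬ RootPairSimilar e₁ e₂)

def HasRootPairRepetition (E : TRS F) : Prop :=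
  ∃ e₁ ∈ E, ∃ e₂ ∈ E, e₁ ≠ e₂ ∧ RootPairSimilar e₁ e₂

def VarPreserving (R : TRS F) : Prop :=
  ∀ e ∈ R, ∀ n, n ∈ Term.varsL e.1 ↔ n ∈ Term.varsL e.2

def RightReduced (R : TRS F) : Prop := ∀ e ∈ R, NormalForm R e.2

def AlmostLeftReduced (R : TRS F) : Prop :=
  ¬ ∃ (l₁ r₁ l₂ r₂ : Term F) (p : List Nat) (u : Term F) (σ : Nat → Term F),
      (l₁, r₁) ∈ R ∧ (l₂, r₂) ∈ R ∧ p ≠ [] ∧ SubtermAt l₁ p u ∧ u = l₂.subst σ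

def NonSubtermCollapsing (R : TRS F) : Prop :=
  ¬ ∃ (t u : Term F) (p : List Nat), p ≠ [] ∧ SubtermAt u p t ∧ Conv R t u

structure LMSystem (R : TRS F) : Prop where
  convergent : Convergent R
  almostLeftReduced : AlmostLeftReduced R
  rightReduced : RightReduced R
  nonCollapsing : NonSubtermCollapsing R
  forwardClosed : FCclosed R
  quasiDet : QuasiDet (RHSset R)

/-- the symbol (function symbol or variable) of a term at a position, if defined -/
def labelAt {F : Type} : List Nat → Term F → Option (F ⊕ Nat)
  | [], t => some t.label
  | i :: p, Term.app _ ts => (ts[i]?).bind (labelAt p)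
  | _ :: _, Term.var _ => none

/-- outermost distinguishing position -/
def ODP (s t : Term F) (p : List Nat) : Prop :=
  (labelAt p s ≠ none ∨ labelAt p t ≠ none) ∧
  labelAt p s ≠ labelAt p t ∧
  ∀ q, q <+: p → q ≠ p → labelAt q s = labelAt q t

/-!
Everything is governed by the normal form `u` of `s`: joinability means that `t` also reduces
to `u`. Forward closure turns `s →* u` into a single step, at the root since all proper
subterms of `s` are normal, and likewise `t →* u` when `t` is not already `u`; quasi-determinism
of `RHS(R)` makes the rule of each such step the only one with its root pair. Cases (a) and (b)
exclude each other: in case (b) the right-hand sides of the two rules overlap, so `RHS(R)`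
contains the critical equation built from a most general unifier, with root pair `(f, g)`,
and quasi-determinism leaves no room for a rule of `R` with that root pair.
-/
namespace Term

variable {F : Type}

@[induction_eliminator]
theorem ind {P : Term F → Prop} (var : ∀ n, P (var n))
    (app : ∀ f ts, (∀ t ∈ ts, P t) → P (app f ts)) (t : Term F) : P t := by
  induction t using Term.rec (motive_2 := fun ts => ∀ t ∈ ts, P t) with
  | var n => exact var n
  | app f ts ih => exact app f ts ih
  | nil => simp_all
  | cons t ts ih ihs => rename_i u hu; exact List.forall_mem_cons.2 ⟨ih, ihs⟩ u hu

def size : Term F → ℕ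
  | var _ => 1
  | app _ ts => 1 + (ts.attach.map fun ⟨t, _⟩ => t.size).sum

@[simp] theorem subst_var (σ : ℕ → Term F) (n : ℕ) : (var n).subst σ = σ n := by simp [subst]

@[simp] theorem subst_app (σ : ℕ → Term F) (f : F) (ts : List (Term F)) :
    (app f ts).subst σ = app f (ts.map (subst σ)) := by simp [subst]

@[simp] theorem varsL_var (n : ℕ) : (var n : Term F).varsL = [n] := by simp [varsL]

@[simp] theorem mem_varsL_app {f : F} {ts : List (Term F)} {n : ℕ} :
    n ∈ (app f ts).varsL ↔ ∃ t ∈ ts, n ∈ t.varsL := by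
  simp [varsL]

@[simp] theorem size_var (n : ℕ) : (var n : Term F).size = 1 := by simp [size]

@[simp] theorem size_app (f : F) (ts : List (Term F)) :
    (app f ts).size = 1 + (ts.map size).sum := by simp [size]

@[simp] theorem root_app (f : F) (ts : List (Term F)) : (app f ts).root = some f := rfl

theorem subst_subst (σ τ : ℕ → Term F) (t : Term F) :
    (t.subst σ).subst τ = t.subst fun n => (σ n).subst τ := by
  induction t with
  | var n => simp
  | app f ts ih => simpa using List.map_congr_left ih

theorem subst_congr {σ τ : ℕ → Term F} {t : Term F} (h : ∀ n ∈ t.varsL, σ n = τ n) :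
    t.subst σ = t.subst τ := by
  induction t with
  | var n => simpa using h
  | app f ts ih =>
    simp only [mem_varsL_app] at h
    simpa using List.map_congr_left fun u hu => ih u hu fun n hn => h n ⟨u, hu, hn⟩

theorem subst_eq_self {σ : ℕ → Term F} {t : Term F} (h : ∀ n ∈ t.varsL, σ n = var n) :
    t.subst σ = t := by
  induction t with
  | var n => simpa using h
  | app f ts ih =>
    simp only [mem_varsL_app] at h
    simpa using List.map_congr_left fun u hu => ih u hu fun n hn => h n ⟨u, hu, hn⟩

theorem mem_varsL_subst {σ : ℕ → Term F} {t : Term F} {n : ℕ} :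
    n ∈ (t.subst σ).varsL ↔ ∃ m ∈ t.varsL, n ∈ (σ m).varsL := by
  induction t with
  | var k => simp
  | app f ts ih =>
    simp only [subst_app, mem_varsL_app, List.mem_map]
    constructor
    · rintro ⟨_, ⟨u, hu, rfl⟩, hn⟩
      obtain ⟨m, hm, hnm⟩ := (ih u hu).1 hn
      exact ⟨m, ⟨u, hu, hm⟩, hnm⟩
    · rintro ⟨m, ⟨u, hu, hm⟩, hnm⟩
      exact ⟨_, ⟨u, hu, rfl⟩, (ih u hu).2 ⟨m, hm, hnm⟩⟩

theorem size_pos (t : Term F) : 0 < t.size := by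
  cases t <;> simp

theorem size_le_size_subst {σ : ℕ → Term F} {t : Term F} {x : ℕ} (h : x ∈ t.varsL) :
    (σ x).size ≤ (t.subst σ).size := by
  induction t with
  | var n => simp_all
  | app f ts ih =>
    obtain ⟨u, hu, hx⟩ := mem_varsL_app.1 h
    have := List.le_sum_of_mem (List.mem_map_of_mem (f := size ∘ subst σ) hu)
    simp only [subst_app, size_app, List.map_map, Function.comp_apply] at this ⊢
    linarith [ih u hu hx]

theorem size_lt_size_subst {σ : ℕ → Term F} {f : F} {ts : List (Term F)} {x : ℕ}
    (h : x ∈ (app f ts).varsL) : (σ x).size < ((app f ts).subst σ).size := by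
  obtain ⟨u, hu, hx⟩ := mem_varsL_app.1 h
  have := List.le_sum_of_mem (List.mem_map_of_mem (f := size ∘ subst σ) hu)
  simp only [subst_app, size_app, List.map_map, Function.comp_apply] at this ⊢
  linarith [size_le_size_subst (σ := σ) hx]

theorem root_subst {t : Term F} (ht : ¬ t.IsVar) (σ : ℕ → Term F) :
    (t.subst σ).root = t.root := by
  cases t with
  | var n => exact absurd trivial ht
  | app f ts => simp

theorem exists_root_eq_some {t : Term F} (ht : ¬ t.IsVar) : ∃ f, t.root = some f := by
  cases t with
  | var n => exact absurd trivial ht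
  | app f ts => exact ⟨f, rfl⟩

end Term

section Unification

open Term Function

variable {F : Type}

def UnifiesAll (σ : ℕ → Term F) (P : List (Term F × Term F)) : Prop :=
  ∀ e ∈ P, Unifies σ e.1 e.2

def IsMGUAll (σ : ℕ → Term F) (P : List (Term F × Term F)) : Prop :=
  UnifiesAll σ P ∧ ∀ τ, UnifiesAll τ P → ∃ δ, ∀ x, τ x = (σ x).subst δ

def eqnVars (P : List (Term F × Term F)) : Finset ℕ :=
  (P.flatMap fun e => e.1.varsL ++ e.2.varsL).toFinset

def eqnSize (P : List (Term F × Term F)) : ℕ :=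
  (P.map fun e => e.1.size + e.2.size).sum

def substEqns (θ : ℕ → Term F) (P : List (Term F × Term F)) : List (Term F × Term F) :=
  P.map fun e => (e.1.subst θ, e.2.subst θ)

variable {σ τ θ μ : ℕ → Term F} {P : List (Term F × Term F)} {a b t : Term F} {x : ℕ}

@[simp] theorem unifiesAll_nil : UnifiesAll σ [] := by simp [UnifiesAll]

@[simp] theorem unifiesAll_cons :
    UnifiesAll σ ((a, b) :: P) ↔ a.subst σ = b.subst σ ∧ UnifiesAll σ P := by
  simp [UnifiesAll, Unifies]

@[simp] theorem unifiesAll_append {Q : List (Term F × Term F)} :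
    UnifiesAll σ (P ++ Q) ↔ UnifiesAll σ P ∧ UnifiesAll σ Q := by
  simp [UnifiesAll, or_imp, forall_and]

theorem unifiesAll_substEqns :
    UnifiesAll τ (substEqns θ P) ↔ UnifiesAll (fun n => (θ n).subst τ) P := by
  simp only [UnifiesAll, substEqns, List.forall_mem_map, Unifies, subst_subst]

theorem mem_eqnVars {n : ℕ} : n ∈ eqnVars P ↔ ∃ e ∈ P, n ∈ e.1.varsL ∨ n ∈ e.2.varsL := by
  simp [eqnVars]

@[simp] theorem eqnSize_cons : eqnSize ((a, b) :: P) = a.size + b.size + eqnSize P := by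
  simp [eqnSize]

@[simp] theorem eqnSize_append {Q : List (Term F × Term F)} :
    eqnSize (P ++ Q) = eqnSize P + eqnSize Q := by
  simp [eqnSize]

theorem isMGUAll_nil : IsMGUAll (var : ℕ → Term F) [] :=
  ⟨unifiesAll_nil, fun τ _ => ⟨τ, fun x => by simp⟩⟩

theorem IsMGUAll.cons_self (h : IsMGUAll σ P) : IsMGUAll σ ((t, t) :: P) :=
  ⟨unifiesAll_cons.2 ⟨rfl, h.1⟩, fun τ hτ => h.2 τ (unifiesAll_cons.1 hτ).2⟩

theorem unifiesAll_swap : UnifiesAll σ ((a, b) :: P) ↔ UnifiesAll σ ((b, a) :: P) := by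
  simp only [unifiesAll_cons, eq_comm]

theorem IsMGUAll.swap (h : IsMGUAll σ ((a, b) :: P)) : IsMGUAll σ ((b, a) :: P) :=
  ⟨unifiesAll_swap.1 h.1, fun τ hτ => h.2 τ (unifiesAll_swap.2 hτ)⟩

theorem subst_update_of_not_mem (hx : x ∉ a.varsL) : a.subst (update var x t) = a :=
  subst_eq_self fun _ hn => update_of_ne (ne_of_mem_of_not_mem hn hx) _ _

theorem update_subst_eq (h : τ x = t.subst τ) : (fun n => (update var x t n).subst τ) = τ := by
  funext n
  rcases eq_or_ne n x with rfl | hn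
  · simp [h]
  · simp [hn]

theorem IsMGUAll.elim (hx : x ∉ t.varsL) (hμ : IsMGUAll μ (substEqns (update var x t) P)) :
    IsMGUAll (fun n => (update var x t n).subst μ) ((var x, t) :: P) := by
  refine ⟨unifiesAll_cons.2 ⟨?_, unifiesAll_substEqns.1 hμ.1⟩, fun τ hτ => ?_⟩
  · simp only [subst_var, update_self]
    rw [← subst_subst, subst_update_of_not_mem hx]
  · obtain ⟨hτx, hτP⟩ := unifiesAll_cons.1 hτ
    rw [subst_var] at hτx
    obtain ⟨δ, hδ⟩ := hμ.2 τ (by rwa [unifiesAll_substEqns, update_subst_eq hτx])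
    refine ⟨δ, fun y => ?_⟩
    rw [subst_subst, show (fun n => (μ n).subst δ) = τ from funext fun n => (hδ n).symm]
    exact (congrFun (update_subst_eq hτx) y).symm

theorem mem_varsL_subst_update {n : ℕ} (hx : x ∉ t.varsL)
    (hn : n ∈ (a.subst (update var x t)).varsL) : n ≠ x ∧ (n ∈ a.varsL ∨ n ∈ t.varsL) := by
  obtain ⟨m, hm, hnm⟩ := mem_varsL_subst.1 hn
  rcases eq_or_ne m x with rfl | hmx
  · rw [update_self] at hnm
    exact ⟨ne_of_mem_of_not_mem hnm hx, Or.inr hnm⟩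
  · rw [update_of_ne hmx, varsL_var, List.mem_singleton] at hnm
    exact ⟨hnm ▸ hmx, Or.inl (hnm ▸ hm)⟩

theorem eqnVars_substEqns_update_subset (hx : x ∉ t.varsL) :
    eqnVars (substEqns (update var x t) P) ⊆ (eqnVars ((var x, t) :: P)).erase x := by
  intro n hn
  obtain ⟨_, he', hn⟩ := mem_eqnVars.1 hn
  obtain ⟨e, he, rfl⟩ := List.mem_map.1 he'
  obtain ⟨hnx, hn⟩ : n ≠ x ∧ (n ∈ e.1.varsL ∨ n ∈ e.2.varsL ∨ n ∈ t.varsL) := by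
    rcases hn with hn | hn <;> obtain ⟨hnx, hn | hn⟩ := mem_varsL_subst_update hx hn <;> tauto
  refine Finset.mem_erase.2 ⟨hnx, mem_eqnVars.2 ?_⟩
  rcases hn with hn | hn | hn
  · exact ⟨e, List.mem_cons_of_mem _ he, Or.inl hn⟩
  · exact ⟨e, List.mem_cons_of_mem _ he, Or.inr hn⟩
  · exact ⟨_, List.mem_cons_self, Or.inr hn⟩

theorem map_subst_eq_map_subst_iff {ss ts : List (Term F)} :
    ss.map (subst τ) = ts.map (subst τ) ↔ ss.length = ts.length ∧ UnifiesAll τ (ss.zip ts) := by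
  rw [← List.forall₂_eq_eq_eq, List.forall₂_map_left_iff, List.forall₂_map_right_iff,
    List.forall₂_iff_zip]
  simp [UnifiesAll, Unifies]

theorem unifiesAll_app_cons {f g : F} {ss ts : List (Term F)} :
    UnifiesAll τ ((app f ss, app g ts) :: P) ↔
      f = g ∧ ss.length = ts.length ∧ UnifiesAll τ (ss.zip ts ++ P) := by
  simp [map_subst_eq_map_subst_iff, and_assoc]

theorem eqnVars_zip_subset {f g : F} {ss ts : List (Term F)} :
    eqnVars (ss.zip ts ++ P) ⊆ eqnVars ((app f ss, app g ts) :: P) := by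
  intro n hn
  obtain ⟨e, he, hn⟩ := mem_eqnVars.1 hn
  refine mem_eqnVars.2 ?_
  rcases List.mem_append.1 he with he | he
  · obtain ⟨h1, h2⟩ := List.of_mem_zip he
    refine ⟨_, List.mem_cons_self, ?_⟩
    simp only [mem_varsL_app]
    rcases hn with hn | hn
    exacts [Or.inl ⟨_, h1, hn⟩, Or.inr ⟨_, h2, hn⟩]
  · exact ⟨e, List.mem_cons_of_mem _ he, hn⟩

theorem eqnSize_zip {ss ts : List (Term F)} (h : ss.length = ts.length) :
    eqnSize (ss.zip ts) = (ss.map size).sum + (ts.map size).sum := by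
  rw [eqnSize, List.sum_map_add]
  congr 2
  · exact List.map_map.symm.trans (congrArg (List.map size) (List.map_fst_zip h.le))
  · exact List.map_map.symm.trans (congrArg (List.map size) (List.map_snd_zip h.ge))

theorem not_mem_varsL_of_subst_eq (h : (var x).subst τ = t.subst τ) (ht : t ≠ var x) :
    x ∉ t.varsL := by
  intro hx
  rw [subst_var] at h
  cases t with
  | var y => simp_all
  | app f ts => exact (size_lt_size_subst (σ := τ) hx).ne (congrArg size h)

theorem eqnVars_subset_cons {e : Term F × Term F} : eqnVars P ⊆ eqnVars (e :: P) :=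
  fun _ hn => by
    obtain ⟨e', he', hn⟩ := mem_eqnVars.1 hn
    exact mem_eqnVars.2 ⟨e', List.mem_cons_of_mem _ he', hn⟩

theorem eqnVars_swap : eqnVars ((a, b) :: P) = eqnVars ((b, a) :: P) := by
  ext n
  simp only [mem_eqnVars, List.mem_cons, or_and_right, exists_or, exists_eq_left,
    or_comm (a := n ∈ a.varsL)]

theorem eqnSize_lt_cons : eqnSize P < eqnSize ((a, b) :: P) := by
  have := size_pos a
  simp only [eqnSize_cons]
  omega

theorem card_eqnVars_substEqns_update_lt (hx : x ∉ t.varsL) :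
    (eqnVars (substEqns (update var x t) P)).card < (eqnVars ((var x, t) :: P)).card := by
  refine (Finset.card_le_card (eqnVars_substEqns_update_subset hx)).trans_lt
    (Finset.card_erase_lt_of_mem (mem_eqnVars.2 ⟨_, List.mem_cons_self, Or.inl ?_⟩))
  simp

theorem eqnSize_zip_append_lt {f g : F} {ss ts : List (Term F)} (hlen : ss.length = ts.length) :
    eqnSize (ss.zip ts ++ P) < eqnSize ((app f ss, app g ts) :: P) := by
  simp only [eqnSize_append, eqnSize_zip hlen, eqnSize_cons, size_app]
  omega

theorem lex_lt_of_eqnVars_subset {Q : List (Term F × Term F)} (hsub : eqnVars P ⊆ eqnVars Q)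
    (hsize : eqnSize P < eqnSize Q) :
    Prod.Lex (· < ·) (· < ·) ((eqnVars P).card, eqnSize P) ((eqnVars Q).card, eqnSize Q) := by
  rw [Prod.lex_def]
  have := Finset.card_le_card hsub
  omega

theorem UnifiesAll.substEqns_update (h : UnifiesAll τ ((var x, t) :: P)) :
    UnifiesAll τ (substEqns (update var x t) P) := by
  obtain ⟨hx, hP⟩ := unifiesAll_cons.1 h
  rw [subst_var] at hx
  rwa [unifiesAll_substEqns, update_subst_eq hx]

theorem IsMGUAll.app_cons {f : F} {ss ts : List (Term F)} (hlen : ss.length = ts.length)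
    (h : IsMGUAll σ (ss.zip ts ++ P)) : IsMGUAll σ ((app f ss, app f ts) :: P) :=
  ⟨unifiesAll_app_cons.2 ⟨rfl, hlen, h.1⟩, fun τ hτ => h.2 τ (unifiesAll_app_cons.1 hτ).2.2⟩

theorem exists_isMGUAll : ∀ P : List (Term F × Term F), (∃ τ, UnifiesAll τ P) → ∃ σ, IsMGUAll σ P
  | [], _ => ⟨var, isMGUAll_nil⟩
  | (var x, b) :: P, ⟨τ, hτ⟩ => by
    by_cases hb : b = var x
    · obtain ⟨σ, hσ⟩ := exists_isMGUAll P ⟨τ, (unifiesAll_cons.1 hτ).2⟩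
      exact ⟨σ, hb ▸ hσ.cons_self⟩
    · have hx := not_mem_varsL_of_subst_eq (unifiesAll_cons.1 hτ).1 hb
      obtain ⟨μ, hμ⟩ := exists_isMGUAll _ ⟨τ, hτ.substEqns_update⟩
      exact ⟨_, hμ.elim hx⟩
  | (app f ss, var x) :: P, ⟨τ, hτ⟩ => by
    replace hτ := unifiesAll_swap.1 hτ
    have hx := not_mem_varsL_of_subst_eq (unifiesAll_cons.1 hτ).1 nofun
    obtain ⟨μ, hμ⟩ := exists_isMGUAll _ ⟨τ, hτ.substEqns_update⟩
    exact ⟨_, (hμ.elim hx).swap⟩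
  | (app f ss, app g ts) :: P, ⟨τ, hτ⟩ => by
    obtain ⟨rfl, hlen, hτ⟩ := unifiesAll_app_cons.1 hτ
    obtain ⟨σ, hσ⟩ := exists_isMGUAll _ ⟨τ, hτ⟩
    exact ⟨σ, hσ.app_cons hlen⟩
-- Martelli–Montanari: eliminating `x` removes it from the problem; deleting a trivial
-- equation or decomposing adds no variable and shrinks the total size.
termination_by P => ((eqnVars P).card, eqnSize P)
decreasing_by
  · exact lex_lt_of_eqnVars_subset eqnVars_subset_cons eqnSize_lt_cons
  · exact Prod.Lex.left _ _ (card_eqnVars_substEqns_update_lt hx)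
  · exact Prod.Lex.left _ _ (eqnVars_swap (a := app f ss) ▸ card_eqnVars_substEqns_update_lt hx)
  · exact lex_lt_of_eqnVars_subset eqnVars_zip_subset (eqnSize_zip_append_lt hlen)

theorem exists_isMGU {s t : Term F} (h : Unifies τ s t) : ∃ σ, IsMGU σ s t := by
  obtain ⟨σ, hσ, hmgu⟩ := exists_isMGUAll [(s, t)] ⟨τ, by simpa [Unifies] using h⟩
  exact ⟨σ, by simpa [Unifies] using hσ, fun τ hτ => hmgu τ (by simpa [Unifies] using hτ)⟩

end Unification

section Rewriting

open Term

variable {F : Type} {R : TRS F} {e : Rule F} {s t u : Term F}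

theorem oneStep_subst (he : e ∈ R) (σ : ℕ → Term F) : OneStep R (e.1.subst σ) (e.2.subst σ) :=
  ⟨e, he, σ, [], .here _, .here _ _⟩

theorem SubtermAt.eq_of_nil {v : Term F} (h : SubtermAt t [] v) : v = t := by
  cases h; rfl

theorem ReplaceAt.eq_of_nil {v w : Term F} (h : ReplaceAt t [] v w) : w = v := by
  cases h; rfl

theorem EpsIrreducible.exists_subst_of_ruleStep (hs : EpsIrreducible R s) (he : e ∈ R)
    (h : RuleStep e s t) : ∃ σ, s = e.1.subst σ ∧ t = e.2.subst σ := by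
  obtain ⟨σ, p, hsub, hrep⟩ := h
  rcases eq_or_ne p [] with rfl | hp
  · exact ⟨σ, hsub.eq_of_nil.symm, hrep.eq_of_nil⟩
  · exact absurd (oneStep_subst he σ) (hs p _ hsub hp _)

theorem NormalForm.eq_of_starRW (hu : NormalForm R u) (h : StarRW R u t) : t = u := by
  induction h with
  | refl => rfl
  | tail _ hstep ih => exact absurd (ih ▸ hstep) (hu _)

theorem Terminating.exists_nfOf (hT : Terminating R) (s : Term F) : ∃ u, NFof R s u := by
  induction s using hT.induction with
  | _ s ih =>
    by_cases hs : NormalForm R s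
    · exact ⟨s, .refl, hs⟩
    · obtain ⟨t, hst⟩ := not_forall_not.1 hs
      obtain ⟨u, htu, hu⟩ := ih t hst
      exact ⟨u, .head hst htu, hu⟩

theorem Confluent.nfOf_of_joinable (hC : Confluent R) (hj : Joinable R s t) (hu : NFof R s u) :
    NFof R t u := by
  obtain ⟨v, hsv, htv⟩ := hj
  obtain ⟨w, hvw, huw⟩ := hC s v u hsv hu.1
  obtain rfl := hu.2.eq_of_starRW huw
  exact ⟨htv.trans hvw, hu.2⟩

theorem exists_renaming_apart (N : ℕ) (σ₁ σ₂ : ℕ → Term F) :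
    ∃ ρ τ : ℕ → Term F, IsRenaming ρ ∧
      (∀ t : Term F, (∀ n ∈ t.varsL, n < N) → t.subst τ = t.subst σ₁) ∧
      ∀ t : Term F, (t.subst ρ).subst τ = t.subst σ₂ := by
  refine ⟨fun n => var (n + N), fun y => if N ≤ y then σ₂ (y - N) else σ₁ y,
    ⟨(· + N), add_left_injective N, fun _ => rfl⟩, fun t ht => subst_congr fun n hn => ?_,
    fun t => ?_⟩
  · simp [(ht n hn).not_ge]
  · rw [subst_subst]
    exact subst_congr fun n _ => by simp

theorem LMSystem.not_isVar (hlm : LMSystem R) (he : e ∈ R) : ¬ e.1.IsVar ∧ ¬ e.2.IsVar :=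
  hlm.quasiDet.1 e (Or.inl he)

theorem LMSystem.eq_of_root_eq (hlm : LMSystem R) {e' : Rule F} (he : e ∈ R) (he' : e' ∈ R)
    (h₁ : e.1.root = e'.1.root) (h₂ : e.2.root = e'.2.root) : e = e' := by
  by_contra hne
  exact hlm.quasiDet.2.2 e (Or.inl he) e' (Or.inl he') hne (Or.inl ⟨h₁, h₂⟩)

theorem LMSystem.existsUnique_ruleStep_of_nfOf (hlm : LMSystem R) {f : F} {ss : List (Term F)}
    (hs : InnermostRedex R (app f ss)) (hu : NFof R (app f ss) u) :
    ∃ h, u.root = some h ∧ ∃! e : Rule F, e ∈ R ∧ e.1.root = some f ∧ e.2.root = some h ∧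
      RuleStep e (app f ss) u := by
  obtain ⟨e, he, hstep⟩ := hlm.forwardClosed _ hs u hu
  obtain ⟨σ, hs', hu'⟩ := hs.1.exists_subst_of_ruleStep he hstep
  obtain ⟨hl, hr⟩ := hlm.not_isVar he
  obtain ⟨h, hh⟩ := exists_root_eq_some hr
  have hf : e.1.root = some f := by rw [← root_subst hl σ, ← hs', root_app]
  refine ⟨h, by rw [hu', root_subst hr, hh], ⟨e, ⟨he, hf, hh, hstep⟩, ?_⟩⟩
  rintro e' ⟨he', hf', hh', -⟩
  exact hlm.eq_of_root_eq he' he (hf'.trans hf.symm) (hh'.trans hh.symm)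

theorem LMSystem.not_rootPair_of_rhs_overlap (hlm : LMSystem R) {e₁ e₂ : Rule F}
    (he₁ : e₁ ∈ R) (he₂ : e₂ ∈ R) {σ₁ σ₂ : ℕ → Term F} (h : e₁.2.subst σ₁ = e₂.2.subst σ₂)
    (he : e ∈ R) : ¬ (e.1.root = e₁.1.root ∧ e.2.root = e₂.1.root) := by
  rintro ⟨h₁, h₂⟩
  obtain ⟨ρ, τ, hρ, hτ₁, hτ₂⟩ := exists_renaming_apart (e₁.2.varsL.sum + 1) σ₁ σ₂
  obtain ⟨μ, hμ⟩ := exists_isMGU (τ := τ) (s := e₁.2) (t := e₂.2.subst ρ) <| by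
    rw [Unifies, hτ₂, hτ₁ _ fun n hn => Nat.lt_succ_of_le (List.le_sum_of_mem hn)]
    exact h
  have hroot₁ : (e₁.1.subst μ).root = e₁.1.root := root_subst (hlm.not_isVar he₁).1 μ
  have hroot₂ : ((e₂.1.subst ρ).subst μ).root = e₂.1.root := by
    rw [subst_subst, root_subst (hlm.not_isVar he₂).1]
  by_cases hlhs : e₁.1.subst μ = (e₂.1.subst ρ).subst μ
  · exact hlm.quasiDet.2.1 e (Or.inl he) (by rw [h₁, h₂, ← hroot₁, hlhs, hroot₂])
  · have hmem : (e₁.1.subst μ, (e₂.1.subst ρ).subst μ) ∈ RHSset R :=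
      Or.inr ⟨_, _, _, _, ρ, μ, he₁, he₂, hρ, hμ, hlhs, rfl⟩
    have hne : e ≠ (e₁.1.subst μ, (e₂.1.subst ρ).subst μ) := by
      rintro rfl
      have hstep := oneStep_subst he₂ fun n => (ρ n).subst μ
      rw [← subst_subst, ← subst_subst] at hstep
      exact hlm.rightReduced _ he _ hstep
    exact hlm.quasiDet.2.2 e (Or.inl he) _ hmem hne
      (Or.inl ⟨h₁.trans hroot₁.symm, h₂.trans hroot₂.symm⟩)

end Rewriting

theorem joinable_exactly_two_general {F : Type} (R : TRS F) (hlm : LMSystem R)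
    (f g : F) (ss ts : List (Term F))
    (hs : InnermostRedex R (Term.app f ss))
    (ht : EpsIrreducible R (Term.app g ts)) :
    Joinable R (Term.app f ss) (Term.app g ts) ↔
      Xor'
        (∃! e : Rule F, e ∈ R ∧ e.1.root = some f ∧ e.2.root = some g ∧
          RuleStep e (Term.app f ss) (Term.app g ts))
        (∃ (h : F) (that : Term F),
          (∃! e : Rule F, e ∈ R ∧ e.1.root = some f ∧ e.2.root = some h ∧
            RuleStep e (Term.app f ss) that) ∧
          (∃! e : Rule F, e ∈ R ∧ e.1.root = some g ∧ e.2.root = some h ∧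
            RuleStep e (Term.app g ts) that)) := by
  refine Iff.trans ?_ (xor_iff_or_and_not_and _ _).symm
  refine ⟨fun hj => ⟨?_, ?_⟩, ?_⟩
  · obtain ⟨u, hu⟩ := hlm.convergent.2.exists_nfOf (Term.app f ss)
    have htu := hlm.convergent.1.nfOf_of_joinable hj hu
    obtain ⟨h, hroot, hsu⟩ := hlm.existsUnique_ruleStep_of_nfOf hs hu
    by_cases htn : NormalForm R (Term.app g ts)
    · obtain rfl := htn.eq_of_starRW htu.1
      obtain rfl : g = h := Option.some_injective _ hroot
      exact Or.inl hsu
    · obtain ⟨h', hroot', htu⟩ := hlm.existsUnique_ruleStep_of_nfOf ⟨ht, htn⟩ htu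
      obtain rfl : h = h' := Option.some_injective _ (hroot.symm.trans hroot')
      exact Or.inr ⟨h, u, hsu, htu⟩
  · rintro ⟨⟨e, ⟨he, hef, heg, -⟩, -⟩, h, that, ⟨e₁, ⟨he₁, hf₁, -, hstep₁⟩, -⟩,
      ⟨e₂, ⟨he₂, hg₂, -, hstep₂⟩, -⟩⟩
    obtain ⟨σ₁, -, rfl⟩ := hs.1.exists_subst_of_ruleStep he₁ hstep₁
    obtain ⟨σ₂, -, hthat⟩ := ht.exists_subst_of_ruleStep he₂ hstep₂
    exact hlm.not_rootPair_of_rhs_overlap he₁ he₂ hthat he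
      ⟨hef.trans hf₁.symm, heg.trans hg₂.symm⟩
  · rintro ⟨⟨e, ⟨he, -, -, hstep⟩, -⟩ | ⟨h, that, ⟨e₁, ⟨he₁, -, -, hstep₁⟩, -⟩,
      ⟨e₂, ⟨he₂, -, -, hstep₂⟩, -⟩⟩, -⟩
    · exact ⟨_, .single ⟨e, he, hstep⟩, .refl⟩
    · exact ⟨that, .single ⟨e₁, he₁, hstep₁⟩, .single ⟨e₂, he₂, hstep₂⟩⟩

/-- joinability of an innermost redex and an epsilon-bar-irreducible term
with distinct root symbols holds iff exactly one of the two described cases holds. -/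
theorem joinable_exactly_two {F : Type} (R : TRS F) (hlm : LMSystem R)
    (f g : F) (ss ts : List (Term F)) (hfg : f ≠ g)
    (hs : InnermostRedex R (Term.app f ss))
    (ht : EpsIrreducible R (Term.app g ts)) :
    Joinable R (Term.app f ss) (Term.app g ts) ↔
      Xor'
        (∃! e : Rule F, e ∈ R ∧ e.1.root = some f ∧ e.2.root = some g ∧
          RuleStep e (Term.app f ss) (Term.app g ts))
        (∃ (h : F) (that : Term F),
          (∃! e : Rule F, e ∈ R ∧ e.1.root = some f ∧ e.2.root = some h ∧
            RuleStep e (Term.app f ss) that) ∧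
          (∃! e : Rule F, e ∈ R ∧ e.1.root = some g ∧ e.2.root = some h ∧
            RuleStep e (Term.app g ts) that)) :=
  joinable_exactly_two_general R hlm f g ss ts hs ht
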